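/- Consider an LSS with D modes. Suppose there exist symmetric positive definite matrices Q_q ∈ ℝ^{n_q×n_q}, a constant M > 0 with A_qᵀ Q_q + Q_q A_q + M Q_q ≺ 0 for all modes q, and positive scalars γ_{i,j} with γ_{i,j} K_{i,j}ᵀ Q_j K_{i,j} ≺ Q_i for all i ≠ j. Set γ = min_{i≠j} γ_{i,j} and μ = −(ln γ)/M. Then the LSS is uniformly exponentially stable with dwell time 2μ. -/

import Mathlib

open Matrix MeasureTheory

/-- A linear switched system (LSS) with `D` modes: mode `q` has state dimension `n q`,
dynamics matrices `A q`, `B q`, output matrix `C q`, and `K q1 q2` is the coupling matrix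
applied to the state when switching from mode `q1` to mode `q2`. -/
structure LSS (D m p : ℕ) where
  n : Fin D → ℕ
  A : (q : Fin D) → Matrix (Fin (n q)) (Fin (n q)) ℝ
  B : (q : Fin D) → Matrix (Fin (n q)) (Fin m) ℝ
  C : (q : Fin D) → Matrix (Fin p) (Fin (n q)) ℝ
  K : (q1 q2 : Fin D) → Matrix (Fin (n q2)) (Fin (n q1)) ℝ

/-- A switching scenario: a sequence of modes `σ 0, σ 1, …` with `σ i ≠ σ (i+1)` and
strictly increasing switching times `0 = T 0 < T 1 < ⋯`; the `(i+1)`-st dwell time is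
`T (i+1) - T i`. -/
structure SwitchingScenario (D : ℕ) where
  σ : ℕ → Fin D
  T : ℕ → ℝ
  hσ : ∀ i, σ i ≠ σ (i + 1)
  hT0 : T 0 = 0
  hTmono : StrictMono T

/-- `x i` is the piece of the trajectory on the interval `[T i, T (i+1)]` (the system is
in mode `σ i` there): it solves the mode-`σ i` linear ODE driven by `u` and satisfies the
jump conditions given by the coupling matrices. -/
def IsTrajectory {D m p : ℕ} (sys : LSS D m p) (S : SwitchingScenario D)
    (u : ℝ → Fin m → ℝ) (x : (i : ℕ) → ℝ → Fin (sys.n (S.σ i)) → ℝ) : Prop :=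
  (∀ i : ℕ, ∀ s ∈ Set.Icc (S.T i) (S.T (i + 1)),
      HasDerivAt (x i) ((sys.A (S.σ i)).mulVec (x i s) + (sys.B (S.σ i)).mulVec (u s)) s) ∧
  (∀ i : ℕ, x (i + 1) (S.T (i + 1)) =
      (sys.K (S.σ i) (S.σ (i + 1))).mulVec (x i (S.T (i + 1))))

/-- `y` is the output of the trajectory `x`: `y t = C_{σ i} (x i t)` for
`t ∈ (T i, T (i+1)]`. -/
def IsOutput {D m p : ℕ} (sys : LSS D m p) (S : SwitchingScenario D)
    (x : (i : ℕ) → ℝ → Fin (sys.n (S.σ i)) → ℝ) (y : ℝ → Fin p → ℝ) : Prop :=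
  ∀ i : ℕ, ∀ s ∈ Set.Ioc (S.T i) (S.T (i + 1)), y s = (sys.C (S.σ i)).mulVec (x i s)

/-- The LSS is uniformly exponentially stable with dwell time `μ`: there exist constants
`K, M' > 0` such that every zero-input trajectory along a switching scenario whose dwell
times are all `≥ μ` satisfies `‖x(t)‖₂ ≤ K e^{−M't} ‖x(0)‖₂` for all `t ≥ 0`. -/
def UnifExpStable {D m p : ℕ} (sys : LSS D m p) (μ : ℝ) : Prop :=
  ∃ Kc > (0:ℝ), ∃ M' > (0:ℝ),
    ∀ (S : SwitchingScenario D), (∀ i : ℕ, μ ≤ S.T (i + 1) - S.T i) →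
      ∀ (x : (i : ℕ) → ℝ → Fin (sys.n (S.σ i)) → ℝ),
        IsTrajectory sys S (fun _ _ => 0) x →
        (Real.sqrt (∑ j, (x 0 0 j) ^ 2) ≤
            Kc * Real.exp (-(M' * 0)) * Real.sqrt (∑ j, (x 0 0 j) ^ 2)) ∧
        ∀ i : ℕ, ∀ t ∈ Set.Ioc (S.T i) (S.T (i + 1)),
          Real.sqrt (∑ j, (x i t j) ^ 2) ≤
            Kc * Real.exp (-(M' * t)) * Real.sqrt (∑ j, (x 0 0 j) ^ 2)

/-!
Along a mode `q` the Lyapunov function `V = xᵀ Q_q x` satisfies `V' ≤ -M V`, so it decays like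
`e^{-M t}`, and at a switch it grows by at most the factor `γ⁻¹`. With dwell times `≥ 2μ`, the
`i`-th switch happens at a time `≥ 2iμ`, so the accumulated factor `γ^{-i} = e^{iMμ}` is at most
`e^{M t / 2}` and `V` still decays like `e^{-M t / 2}`. Since `V` is comparable to `‖x‖²`
uniformly in the mode, `‖x‖` decays like `e^{-M t / 4}`.
-/

open Set Real

section QuadraticForms

variable {ι κ : Type*} [Fintype ι] [Fintype κ]

theorem exists_bounds_of_isHomogeneous_two {E : Type*} [NormedAddCommGroup E] [NormedSpace ℝ E]
    [ProperSpace E] {f : E → ℝ} (hf : Continuous f) (hsmul : ∀ (a : ℝ) v, f (a • v) = a ^ 2 * f v)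
    (hpos : ∀ v ≠ 0, 0 < f v) :
    ∃ c > 0, ∃ C ≥ c, ∀ v, c * ‖v‖ ^ 2 ≤ f v ∧ f v ≤ C * ‖v‖ ^ 2 := by
  have hf0 : f 0 = 0 := by simpa using hsmul 0 0
  rcases subsingleton_or_nontrivial E with hE | hE
  · exact ⟨1, one_pos, 1, le_rfl, fun v => by simp [Subsingleton.elim v 0, hf0]⟩
  have hS : (Metric.sphere (0 : E) 1).Nonempty := NormedSpace.sphere_nonempty.2 zero_le_one
  obtain ⟨vmin, hvmin, hmin⟩ := (isCompact_sphere (0 : E) 1).exists_isMinOn hS hf.continuousOn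
  obtain ⟨vmax, hvmax, hmax⟩ := (isCompact_sphere (0 : E) 1).exists_isMaxOn hS hf.continuousOn
  have hvmin0 : vmin ≠ 0 := ne_zero_of_mem_unit_sphere ⟨vmin, hvmin⟩
  refine ⟨f vmin, hpos vmin hvmin0, f vmax, hmin hvmax, fun v => ?_⟩
  rcases eq_or_ne v 0 with rfl | hv
  · simp [hf0]
  have hu : ‖v‖⁻¹ • v ∈ Metric.sphere (0 : E) 1 := by
    simp [norm_smul, norm_ne_zero_iff.2 hv]
  have hfv : f v = ‖v‖ ^ 2 * f (‖v‖⁻¹ • v) := by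
    rw [hsmul, ← mul_assoc, ← mul_pow, mul_inv_cancel₀ (norm_ne_zero_iff.2 hv), one_pow, one_mul]
  rw [hfv, mul_comm (f vmin), mul_comm (f vmax)]
  exact ⟨mul_le_mul_of_nonneg_left (hmin hu) (by positivity),
    mul_le_mul_of_nonneg_left (hmax hu) (by positivity)⟩

theorem Matrix.PosDef.exists_bounds_dotProduct_mulVec {Q : Matrix ι ι ℝ} (hQ : Q.PosDef) :
    ∃ c > 0, ∃ C ≥ c, ∀ v : ι → ℝ,
      c * ∑ j, v j ^ 2 ≤ v ⬝ᵥ Q *ᵥ v ∧ v ⬝ᵥ Q *ᵥ v ≤ C * ∑ j, v j ^ 2 := by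
  obtain ⟨c, hc, C, hcC, h⟩ := exists_bounds_of_isHomogeneous_two
    (f := fun w : EuclideanSpace ℝ ι => w.ofLp ⬝ᵥ Q *ᵥ w.ofLp) (by fun_prop)
    (fun a w => by
      simp only [WithLp.ofLp_smul, mulVec_smul, dotProduct_smul, smul_dotProduct, smul_eq_mul]
      ring)
    (fun w hw => by simpa using hQ.dotProduct_mulVec_pos (x := w.ofLp) (by simpa using hw))
  exact ⟨c, hc, C, hcC, fun v => by simpa [EuclideanSpace.real_norm_sq_eq] using h (.toLp 2 v)⟩

theorem exists_uniform_bounds_dotProduct_mulVec {α : Type*} [Finite α] [Nonempty α]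
    {n : α → Type*} [∀ q, Fintype (n q)] {Q : (q : α) → Matrix (n q) (n q) ℝ}
    (hQ : ∀ q, (Q q).PosDef) :
    ∃ c > 0, ∃ C ≥ c, ∀ q, ∀ v : n q → ℝ,
      c * ∑ j, v j ^ 2 ≤ v ⬝ᵥ Q q *ᵥ v ∧ v ⬝ᵥ Q q *ᵥ v ≤ C * ∑ j, v j ^ 2 := by
  choose c hc C hcC h using fun q => (hQ q).exists_bounds_dotProduct_mulVec
  obtain ⟨qc, hqc⟩ := Finite.exists_min c
  obtain ⟨qC, hqC⟩ := Finite.exists_max C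
  refine ⟨c qc, hc qc, C qC, (hcC qc).trans (hqC qc), fun q v => ?_⟩
  have hv : 0 ≤ ∑ j, v j ^ 2 := Finset.sum_nonneg fun j _ => sq_nonneg (v j)
  exact ⟨(mul_le_mul_of_nonneg_right (hqc q) hv).trans (h q v).1,
    (h q v).2.trans (mul_le_mul_of_nonneg_right (hqC q) hv)⟩

theorem Matrix.dotProduct_transpose_mul_add_mul_mulVec (A Q : Matrix ι ι ℝ) (v : ι → ℝ) :
    v ⬝ᵥ (Aᵀ * Q + Q * A) *ᵥ v = A *ᵥ v ⬝ᵥ Q *ᵥ v + v ⬝ᵥ Q *ᵥ (A *ᵥ v) := by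
  rw [add_mulVec, dotProduct_add, ← mulVec_mulVec, ← mulVec_mulVec, dotProduct_mulVec,
    vecMul_transpose]

theorem Matrix.PosDef.lyapunov_deriv_le {Q A : Matrix ι ι ℝ} {M : ℝ}
    (hLyap : (-(Aᵀ * Q + Q * A + M • Q)).PosDef) (v : ι → ℝ) :
    A *ᵥ v ⬝ᵥ Q *ᵥ v + v ⬝ᵥ Q *ᵥ (A *ᵥ v) ≤ -M * (v ⬝ᵥ Q *ᵥ v) := by
  have h := hLyap.posSemidef.dotProduct_mulVec_nonneg v
  rw [star_trivial, neg_mulVec, dotProduct_neg, add_mulVec (Aᵀ * Q + Q * A), dotProduct_add,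
    dotProduct_transpose_mul_add_mul_mulVec, smul_mulVec, dotProduct_smul, smul_eq_mul] at h
  linarith

theorem Matrix.PosDef.mul_dotProduct_mulVec_le_of_sub {Qi : Matrix ι ι ℝ} {Qj : Matrix κ κ ℝ}
    {K : Matrix κ ι ℝ} {g : ℝ} (h : (Qi - g • (Kᵀ * Qj * K)).PosDef) (v : ι → ℝ) :
    g * (K *ᵥ v ⬝ᵥ Qj *ᵥ (K *ᵥ v)) ≤ v ⬝ᵥ Qi *ᵥ v := by
  have h := h.posSemidef.dotProduct_mulVec_nonneg v
  rw [star_trivial, sub_mulVec, smul_mulVec, dotProduct_sub, dotProduct_smul, smul_eq_mul,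
    ← mulVec_mulVec, ← mulVec_mulVec, dotProduct_mulVec v Kᵀ, vecMul_transpose] at h
  linarith

end QuadraticForms

section LyapunovDecay

variable {ι κ : Type*} [Fintype ι] [Fintype κ]

theorem HasDerivAt.dotProduct {f g : ℝ → ι → ℝ} {f' g' : ι → ℝ} {t : ℝ}
    (hf : HasDerivAt f f' t) (hg : HasDerivAt g g' t) :
    HasDerivAt (fun s => f s ⬝ᵥ g s) (f' ⬝ᵥ g t + f t ⬝ᵥ g') t := by
  simp only [_root_.dotProduct, ← Finset.sum_add_distrib]
  exact HasDerivAt.fun_sum fun j _ => (hasDerivAt_pi.1 hf j).mul (hasDerivAt_pi.1 hg j)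

theorem HasDerivAt.mulVec (A : Matrix κ ι ℝ) {f : ℝ → ι → ℝ} {f' : ι → ℝ} {t : ℝ}
    (hf : HasDerivAt f f' t) : HasDerivAt (fun s => A *ᵥ f s) (A *ᵥ f') t :=
  (LinearMap.toContinuousLinearMap (Matrix.mulVecLin A)).hasFDerivAt.comp_hasDerivAt t hf

theorem le_exp_mul_of_hasDerivAt_le {V V' : ℝ → ℝ} {K a b : ℝ}
    (hV : ∀ s ∈ Icc a b, HasDerivAt V (V' s) s) (bound : ∀ s ∈ Icc a b, V' s ≤ K * V s) :
    ∀ t ∈ Icc a b, V t ≤ exp (K * (t - a)) * V a := by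
  intro t ht
  have h := le_gronwallBound_of_liminf_deriv_right_le (δ := V a) (ε := 0)
    (fun s hs => (hV s hs).continuousAt.continuousWithinAt)
    (fun s hs _ hr => (hV s (Ico_subset_Icc_self hs)).hasDerivWithinAt.liminf_right_slope_le hr)
    le_rfl (fun s hs => by simpa using bound s (Ico_subset_Icc_self hs)) t ht
  rwa [gronwallBound_ε0, mul_comm] at h

theorem dotProduct_mulVec_le_exp_of_lyapunov {Q A : Matrix ι ι ℝ} {M a b : ℝ}
    (hLyap : (-(Aᵀ * Q + Q * A + M • Q)).PosDef) {x : ℝ → ι → ℝ}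
    (hx : ∀ s ∈ Icc a b, HasDerivAt x (A *ᵥ x s) s) :
    ∀ t ∈ Icc a b, x t ⬝ᵥ Q *ᵥ x t ≤ exp (-M * (t - a)) * (x a ⬝ᵥ Q *ᵥ x a) :=
  le_exp_mul_of_hasDerivAt_le (fun s hs => (hx s hs).dotProduct ((hx s hs).mulVec Q))
    fun s _ => hLyap.lyapunov_deriv_le (x s)

end LyapunovDecay

namespace SwitchingScenario

variable {D : ℕ} (S : SwitchingScenario D)

theorem mul_le_T {τ : ℝ} (hdwell : ∀ i, τ ≤ S.T (i + 1) - S.T i) (i : ℕ) : i * τ ≤ S.T i := by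
  induction i with
  | zero => simp [S.hT0]
  | succ i ih => push_cast; linarith [hdwell i]

theorem le_inv_pow_mul_exp {V : ℕ → ℝ → ℝ} {M γ : ℝ} (hγ : 0 < γ)
    (hdecay : ∀ i, ∀ t ∈ Icc (S.T i) (S.T (i + 1)),
      V i t ≤ exp (-M * (t - S.T i)) * V i (S.T i))
    (hjump : ∀ i, γ * V (i + 1) (S.T (i + 1)) ≤ V i (S.T (i + 1))) (i : ℕ) :
    ∀ t ∈ Icc (S.T i) (S.T (i + 1)), V i t ≤ γ⁻¹ ^ i * exp (-M * t) * V 0 0 := by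
  have extend : ∀ i, V i (S.T i) ≤ γ⁻¹ ^ i * exp (-M * S.T i) * V 0 0 →
      ∀ t ∈ Icc (S.T i) (S.T (i + 1)), V i t ≤ γ⁻¹ ^ i * exp (-M * t) * V 0 0 := by
    intro i hi t ht
    calc V i t ≤ exp (-M * (t - S.T i)) * V i (S.T i) := hdecay i t ht
      _ ≤ exp (-M * (t - S.T i)) * (γ⁻¹ ^ i * exp (-M * S.T i) * V 0 0) := by gcongr
      _ = γ⁻¹ ^ i * exp (-M * t) * V 0 0 := by
        rw [show -M * t = -M * (t - S.T i) + -M * S.T i by ring, exp_add]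
        ring
  apply extend
  induction i with
  | zero => simp [S.hT0]
  | succ i ih =>
    have hT : S.T i ≤ S.T (i + 1) := (S.hTmono (Nat.lt_succ_self i)).le
    calc V (i + 1) (S.T (i + 1)) ≤ γ⁻¹ * V i (S.T (i + 1)) := by
          rw [le_inv_mul_iff₀ hγ]
          exact hjump i
      _ ≤ γ⁻¹ * (γ⁻¹ ^ i * exp (-M * S.T (i + 1)) * V 0 0) := by
          gcongr
          exact extend i ih _ ⟨hT, le_rfl⟩
      _ = γ⁻¹ ^ (i + 1) * exp (-M * S.T (i + 1)) * V 0 0 := by ring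

end SwitchingScenario

theorem inv_pow_mul_exp_le {γ M t : ℝ} {i : ℕ} (hγ : 0 < γ) (hM : 0 < M)
    (ht : i * (2 * (-Real.log γ / M)) ≤ t) : γ⁻¹ ^ i * exp (-M * t) ≤ exp (-(M / 2) * t) := by
  rw [← exp_log (pow_pos (inv_pos.2 hγ) i), ← exp_add, exp_le_exp, log_pow, log_inv]
  have h : (i : ℝ) * -Real.log γ = M / 2 * (i * (2 * (-Real.log γ / M))) := by
    field_simp
  nlinarith

theorem sqrt_le_sqrt_div_mul_exp_mul_sqrt {E E₀ c C a : ℝ} (hc : 0 < c) (hC : 0 ≤ C)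
    (h : c * E ≤ exp (-(2 * a)) * (C * E₀)) :
    √E ≤ √(C / c) * exp (-a) * √E₀ := by
  have hE : E ≤ (√(C / c) * exp (-a)) ^ 2 * E₀ := by
    refine le_of_mul_le_mul_left (h.trans_eq ?_) hc
    rw [mul_pow, sq_sqrt (div_nonneg hC hc.le), ← exp_nat_mul]
    field_simp
    ring_nf
  calc √E ≤ √((√(C / c) * exp (-a)) ^ 2 * E₀) := sqrt_le_sqrt hE
    _ = √(C / c) * exp (-a) * √E₀ := by
      rw [sqrt_mul (sq_nonneg _), sqrt_sq (by positivity)]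

theorem IsTrajectory.hasDerivAt_of_zero_input {D m p : ℕ} {sys : LSS D m p}
    {S : SwitchingScenario D} {x : (i : ℕ) → ℝ → Fin (sys.n (S.σ i)) → ℝ}
    (hx : IsTrajectory sys S (fun _ _ => 0) x) (i : ℕ) :
    ∀ s ∈ Icc (S.T i) (S.T (i + 1)), HasDerivAt (x i) (sys.A (S.σ i) *ᵥ x i s) s :=
  fun s hs => by simpa [← Pi.zero_def] using hx.1 i s hs

/-- Corollary 2: if positive definite `Q_q` satisfy
`A_qᵀ Q_q + Q_q A_q + M Q_q ≺ 0` for some `M > 0` and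
`γ_{i,j} K_{i,j}ᵀ Q_j K_{i,j} ≺ Q_i` with `γ_{i,j} > 0` for all `i ≠ j`, then with
`γ = min_{i≠j} γ_{i,j}` and `μ = −(ln γ)/M`, the LSS is uniformly exponentially stable
with dwell time `2μ`. -/
theorem stmt_12 {D m p : ℕ} (sys : LSS D m p)
    (Q : (q : Fin D) → Matrix (Fin (sys.n q)) (Fin (sys.n q)) ℝ)
    (hQ : ∀ q, (Q q).PosDef)
    (Mc : ℝ) (hMc : 0 < Mc)
    (hLyap : ∀ q, (-((sys.A q)ᵀ * Q q + Q q * sys.A q + Mc • Q q)).PosDef)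
    (γ : Fin D → Fin D → ℝ) (hγpos : ∀ i j, i ≠ j → 0 < γ i j)
    (hγ : ∀ i j, i ≠ j → (Q i - γ i j • ((sys.K i j)ᵀ * Q j * sys.K i j)).PosDef)
    (γc : ℝ) (hγc : IsLeast {x : ℝ | ∃ i j, i ≠ j ∧ x = γ i j} γc) :
    UnifExpStable sys (2 * (-(Real.log γc) / Mc)) := by
  obtain ⟨⟨i₀, j₀, hij₀, rfl⟩, hγmin⟩ := hγc
  have hγ₀ : 0 < γ i₀ j₀ := hγpos i₀ j₀ hij₀
  have : Nonempty (Fin D) := ⟨i₀⟩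
  obtain ⟨c, hc, C, hcC, hQbounds⟩ := exists_uniform_bounds_dotProduct_mulVec hQ
  refine ⟨√(C / c), sqrt_pos.2 (div_pos (hc.trans_le hcC) hc), Mc / 4, by positivity,
    fun S hdwell x hx => ⟨?_, fun i t ht => ?_⟩⟩
  · simpa using le_mul_of_one_le_left (sqrt_nonneg _) (one_le_sqrt.2 ((one_le_div hc).2 hcC))
  set V : ℕ → ℝ → ℝ := fun i t => x i t ⬝ᵥ Q (S.σ i) *ᵥ x i t
  have hV_nonneg : ∀ i t, 0 ≤ V i t := fun i t => by
    simpa using (hQ (S.σ i)).posSemidef.dotProduct_mulVec_nonneg (x i t)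
  have hdecay : ∀ i, ∀ t ∈ Icc (S.T i) (S.T (i + 1)),
      V i t ≤ exp (-Mc * (t - S.T i)) * V i (S.T i) := fun i =>
    dotProduct_mulVec_le_exp_of_lyapunov (hLyap _) (hx.hasDerivAt_of_zero_input i)
  have hjump : ∀ i, γ i₀ j₀ * V (i + 1) (S.T (i + 1)) ≤ V i (S.T (i + 1)) := fun i => by
    have h := (hγ _ _ (S.hσ i)).mul_dotProduct_mulVec_le_of_sub (x i (S.T (i + 1)))
    rw [← hx.2 i] at h
    exact (mul_le_mul_of_nonneg_right (hγmin ⟨_, _, S.hσ i, rfl⟩) (hV_nonneg _ _)).trans h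
  have hdwell_t := (S.mul_le_T hdwell i).trans ht.1.le
  refine sqrt_le_sqrt_div_mul_exp_mul_sqrt hc (hc.le.trans hcC) ?_
  calc c * ∑ j, x i t j ^ 2 ≤ V i t := (hQbounds _ _).1
    _ ≤ (γ i₀ j₀)⁻¹ ^ i * exp (-Mc * t) * V 0 0 :=
      S.le_inv_pow_mul_exp hγ₀ hdecay hjump i t ⟨ht.1.le, ht.2⟩
    _ ≤ exp (-(Mc / 2) * t) * V 0 0 :=
      mul_le_mul_of_nonneg_right (inv_pow_mul_exp_le hγ₀ hMc hdwell_t) (hV_nonneg 0 0)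
    _ ≤ exp (-(2 * (Mc / 4 * t))) * (C * ∑ j, x 0 0 j ^ 2) := by
      rw [show -(2 * (Mc / 4 * t)) = -(Mc / 2) * t by ring]
      exact mul_le_mul_of_nonneg_left (hQbounds _ _).2 (exp_pos _).le
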